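/- arXiv:2411.14237 — 2 statements merged into one kernel-verified Lean document; each statement's English description precedes it below -/
import Mathlib

section
/- Let λ₁,...,λₙ > 0 and let a ≠ 0, d, b₁, c₁, ..., bₙ, cₙ be real numbers. Define γ : ℝ → Osc_n(λ₁,...,λₙ) by γ(s) = (z(s), (x₁(s), y₁(s), ..., xₙ(s), yₙ(s)), as), where z(s) = (d + (1/(2a)) Σ_k (b_k²+c_k²)/λ_k) s − (1/(2a²)) Σ_k ((b_k²+c_k²)/λ_k²) sin(λ_k a s), x_j(s) = (1/(aλ_j))(b_j sin(λ_j a s) + c_j cos(λ_j a s) − c_j), y_j(s) = (1/(aλ_j))(−b_j cos(λ_j a s) + c_j sin(λ_j a s) + b_j). Then γ is a one-parameter subgroup of Osc_n(λ₁,...,λₙ): γ(s₁ + s₂) = γ(s₁)·γ(s₂) for all s₁, s₂ ∈ ℝ (in particular γ(0) is the identity), and its derivative at s = 0 equals (d, (b₁, c₁, ..., bₙ, cₙ), a). -/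
open Real

noncomputable section

/-- rotation by angle `θ` acting on `ℝ × ℝ` -/
def rot (θ : ℝ) (p : ℝ × ℝ) : ℝ × ℝ :=
  (Real.cos θ * p.1 - Real.sin θ * p.2, Real.sin θ * p.1 + Real.cos θ * p.2)

/-- the matrix `[[0,1],[-1,0]]` acting on `ℝ × ℝ` -/
def Jpair (p : ℝ × ℝ) : ℝ × ℝ := (p.2, -p.1)

/-- euclidean inner product on `ℝ × ℝ` -/
def dot2 (p q : ℝ × ℝ) : ℝ := p.1 * q.1 + p.2 * q.2

/-- underlying set `ℝ × ℝ^{2n} × ℝ` of the oscillator group, where the middle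
factor `ℝ^{2n}` is recorded as `n` pairs `(x_i, y_i)`. -/
abbrev OscG (n : ℕ) := ℝ × (Fin n → ℝ × ℝ) × ℝ

/-- multiplication of the oscillator group `Osc_n(λ₁,…,λₙ)`:
`(z₁,v₁,t₁)·(z₂,v₂,t₂) = (z₁+z₂+½ v₁ᵀ J R(t₁) v₂, v₁ + R(t₁)v₂, t₁+t₂)`,
where `R(t)` rotates the `i`-th pair by the angle `λ_i t`. -/
def oscMul {n : ℕ} (lam : Fin n → ℝ) (g h : OscG n) : OscG n :=
  (g.1 + h.1 + (1/2) * ∑ i, dot2 (g.2.1 i) (Jpair (rot (lam i * g.2.2) (h.2.1 i))),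
   fun i => g.2.1 i + rot (lam i * g.2.2) (h.2.1 i),
   g.2.2 + h.2.2)

/-- identity element of the oscillator group -/
def oscOne (n : ℕ) : OscG n := (0, fun _ => (0, 0), 0)

/-- inverse in the oscillator group: `(z,v,t)⁻¹ = (-z, -R(-t)v, -t)` -/
def oscInv {n : ℕ} (lam : Fin n → ℝ) (g : OscG n) : OscG n :=
  (-g.1, fun i => -(rot (lam i * (-g.2.2)) (g.2.1 i)), -g.2.2)

/-- `Γ` is a lattice of the oscillator group: a discrete subgroup with compact
quotient (the quotient by the right multiplication action of `Γ`). -/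
structure IsLattice {n : ℕ} (lam : Fin n → ℝ) (Γ : Set (OscG n)) : Prop where
  one_mem : oscOne n ∈ Γ
  mul_mem : ∀ g ∈ Γ, ∀ h ∈ Γ, oscMul lam g h ∈ Γ
  inv_mem : ∀ g ∈ Γ, oscInv lam g ∈ Γ
  discrete : DiscreteTopology Γ
  cocompact : CompactSpace (Quot (fun g h : OscG n => ∃ γ ∈ Γ, h = oscMul lam g γ))

/-- `Q(X) = 2ad + Σ_k (b_k² + c_k²)/λ_k` for `X = (d,(b₁,c₁,…,bₙ,cₙ),a)` -/
def Qform {n : ℕ} (lam : Fin n → ℝ) (d a : ℝ) (b c : Fin n → ℝ) : ℝ :=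
  2 * a * d + ∑ k, (b k ^ 2 + c k ^ 2) / lam k

/-- the geodesic through the identity with initial velocity
`X = (d,(b₁,c₁,…,bₙ,cₙ),a)` for the bi-invariant Lorentzian metric on the
oscillator group. -/
def geo {n : ℕ} (lam : Fin n → ℝ) (d : ℝ) (b c : Fin n → ℝ) (a : ℝ) (s : ℝ) : OscG n :=
  if a = 0 then (d * s, fun j => (b j * s, c j * s), 0)
  else
    ((d + (1/(2*a)) * ∑ k, (b k ^ 2 + c k ^ 2) / lam k) * s
        - (1/(2*a^2)) * ∑ k, ((b k ^ 2 + c k ^ 2) / (lam k)^2) * Real.sin (lam k * a * s),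
     fun j => ((1/(a * lam j)) * (b j * Real.sin (lam j * a * s)
                  + c j * Real.cos (lam j * a * s) - c j),
               (1/(a * lam j)) * (-(b j) * Real.cos (lam j * a * s)
                  + c j * Real.sin (lam j * a * s) + b j)),
     a * s)

/-! For `a ≠ 0` the curve is `s ↦ (α s - ½ Σ_k |u_k|² sin(λ_k a s), (R(λ_k a s) u_k - u_k)_k, a s)`
with `u_k = J(b_k, c_k) / (a λ_k)`. Each planar component is an orbit of the rotation group, hence
additive in `s`; the `z`-component is then a cocycle because the symplectic form
`ω(p, q) = ⟨p, J q⟩` is rotation invariant and `ω(u, R(θ) u) = sin θ · |u|²`. -/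

theorem rot_zero (p : ℝ × ℝ) : rot 0 p = p := by
  simp [rot]

theorem rot_add (θ₁ θ₂ : ℝ) (p : ℝ × ℝ) : rot (θ₁ + θ₂) p = rot θ₁ (rot θ₂ p) := by
  simp only [rot, cos_add, sin_add, Prod.mk.injEq]
  constructor <;> ring

theorem rot_sub (θ : ℝ) (p q : ℝ × ℝ) : rot θ (p - q) = rot θ p - rot θ q := by
  simp only [rot, Prod.fst_sub, Prod.snd_sub, Prod.mk_sub_mk, Prod.mk.injEq]
  constructor <;> ring

theorem dot2_Jpair_self (p : ℝ × ℝ) : dot2 p (Jpair p) = 0 := by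
  simp only [dot2, Jpair]
  ring

theorem dot2_Jpair_rot_rot (θ : ℝ) (p q : ℝ × ℝ) :
    dot2 (rot θ p) (Jpair (rot θ q)) = dot2 p (Jpair q) := by
  simp only [dot2, Jpair, rot]
  linear_combination (p.1 * q.2 - p.2 * q.1) * sin_sq_add_cos_sq θ

theorem dot2_Jpair_rot_self (θ : ℝ) (p : ℝ × ℝ) :
    dot2 p (Jpair (rot θ p)) = sin θ * dot2 p p := by
  simp only [dot2, Jpair, rot]
  ring

theorem dot2_sub_Jpair_sub (p p' q q' : ℝ × ℝ) :
    dot2 (p - p') (Jpair (q - q')) =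
      dot2 p (Jpair q) - dot2 p (Jpair q') - dot2 p' (Jpair q) + dot2 p' (Jpair q') := by
  simp only [dot2, Jpair, Prod.fst_sub, Prod.snd_sub]
  ring

theorem dot2_rot_sub_Jpair_rot_rot_sub (θ₁ θ₂ : ℝ) (u : ℝ × ℝ) :
    dot2 (rot θ₁ u - u) (Jpair (rot θ₁ (rot θ₂ u - u))) =
      dot2 u u * (sin θ₁ + sin θ₂ - sin (θ₁ + θ₂)) := by
  rw [rot_sub, dot2_sub_Jpair_sub, dot2_Jpair_rot_rot, dot2_Jpair_rot_rot, dot2_Jpair_self,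
    ← rot_add, dot2_Jpair_rot_self, dot2_Jpair_rot_self, dot2_Jpair_rot_self]
  ring

theorem hasDerivAt_rot_mul (ω s : ℝ) (p : ℝ × ℝ) :
    HasDerivAt (fun t => rot (ω * t) p) (ω • rot (ω * s) (-Jpair p)) s := by
  have hcos := ((hasDerivAt_id s).const_mul ω).cos
  have hsin := ((hasDerivAt_id s).const_mul ω).sin
  refine (((hcos.mul_const p.1).sub (hsin.mul_const p.2)).prodMk
    ((hsin.mul_const p.1).add (hcos.mul_const p.2))).congr_deriv ?_
  simp only [rot, Jpair, id, Prod.neg_mk, Prod.smul_mk, smul_eq_mul, mul_one]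
  ext <;> ring

def oscOrbit {n : ℕ} (lam : Fin n → ℝ) (α a : ℝ) (u : Fin n → ℝ × ℝ) (s : ℝ) : OscG n :=
  (α * s - (1 / 2) * ∑ k, dot2 (u k) (u k) * sin (lam k * a * s),
   fun j => rot (lam j * a * s) (u j) - u j,
   a * s)

theorem oscOrbit_add {n : ℕ} (lam : Fin n → ℝ) (α a : ℝ) (u : Fin n → ℝ × ℝ) (s₁ s₂ : ℝ) :
    oscOrbit lam α a u (s₁ + s₂) = oscMul lam (oscOrbit lam α a u s₁) (oscOrbit lam α a u s₂) := by
  simp only [oscOrbit, oscMul, ← mul_assoc, mul_add, rot_add, dot2_rot_sub_Jpair_rot_rot_sub]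
  refine Prod.ext ?_ (Prod.ext (funext fun j => ?_) ?_)
  · simp only [mul_add, mul_sub, Finset.sum_add_distrib, Finset.sum_sub_distrib]
    ring
  · dsimp only
    rw [rot_sub]
    abel
  · ring

theorem oscOrbit_zero {n : ℕ} (lam : Fin n → ℝ) (α a : ℝ) (u : Fin n → ℝ × ℝ) :
    oscOrbit lam α a u 0 = oscOne n := by
  simp only [oscOrbit, oscOne, mul_zero, sin_zero, rot_zero, sub_self, Finset.sum_const_zero]
  rfl

theorem hasDerivAt_oscOrbit_zero {n : ℕ} (lam : Fin n → ℝ) (α a : ℝ) (u : Fin n → ℝ × ℝ) :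
    HasDerivAt (oscOrbit lam α a u)
      (α - (1 / 2) * ∑ k, dot2 (u k) (u k) * (lam k * a),
        fun j => (lam j * a) • -Jpair (u j), a) 0 := by
  have hz : HasDerivAt (fun s => ∑ k, dot2 (u k) (u k) * sin (lam k * a * s))
      (∑ k, dot2 (u k) (u k) * (lam k * a)) 0 := by
    refine HasDerivAt.fun_sum fun k _ => ?_
    simpa using (((hasDerivAt_id (0 : ℝ)).const_mul (lam k * a)).sin).const_mul (dot2 (u k) (u k))
  have hv : HasDerivAt (fun s j => rot (lam j * a * s) (u j) - u j)
      (fun j => (lam j * a) • -Jpair (u j)) 0 := by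
    refine hasDerivAt_pi.2 fun j => ?_
    simpa [rot_zero] using (hasDerivAt_rot_mul (lam j * a) 0 (u j)).sub_const (u j)
  exact (((hasDerivAt_id 0).const_mul α).sub (hz.const_mul _)).prodMk
    (hv.prodMk ((hasDerivAt_id 0).const_mul a)) |>.congr_deriv (by simp)

theorem geo_eq_oscOrbit {n : ℕ} (lam : Fin n → ℝ) (d : ℝ) (b c : Fin n → ℝ) {a : ℝ} (ha : a ≠ 0) :
    geo lam d b c a = oscOrbit lam (d + (1 / (2 * a)) * ∑ k, (b k ^ 2 + c k ^ 2) / lam k) a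
      (fun j => (a * lam j)⁻¹ • Jpair (b j, c j)) := by
  funext s
  simp only [geo, if_neg ha, oscOrbit, rot, Jpair, dot2, Prod.smul_mk, smul_eq_mul,
    Prod.mk_sub_mk]
  refine Prod.ext ?_ (Prod.ext (funext fun j => ?_) rfl)
  · simp only [Finset.mul_sum]
    congr 1
    refine Finset.sum_congr rfl fun k _ => ?_
    ring
  · simp only [Prod.mk.injEq]
    constructor <;> ring

/-- For `a ≠ 0`, the geodesic `γ` through the identity with initial velocity
`(d,(b₁,c₁,…,bₙ,cₙ),a)` is a one-parameter subgroup of `Osc_n(λ₁,…,λₙ)`: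
`γ(s₁+s₂) = γ(s₁)·γ(s₂)` (in particular `γ(0)` is the identity), and its
derivative at `s = 0` is `(d,(b₁,c₁,…,bₙ,cₙ),a)`. -/
theorem stmt_9 {n : ℕ} (lam : Fin n → ℝ) (hlam : ∀ i, 0 < lam i)
    (d a : ℝ) (ha : a ≠ 0) (b c : Fin n → ℝ) :
    (∀ s₁ s₂ : ℝ,
        geo lam d b c a (s₁ + s₂) = oscMul lam (geo lam d b c a s₁) (geo lam d b c a s₂))
    ∧ geo lam d b c a 0 = oscOne n
    ∧ HasDerivAt (geo lam d b c a) ((d, fun j => (b j, c j), a) : OscG n) 0 := by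
  rw [geo_eq_oscOrbit lam d b c ha]
  refine ⟨oscOrbit_add lam _ a _, oscOrbit_zero lam _ a _, ?_⟩
  refine (hasDerivAt_oscOrbit_zero lam _ a _).congr_deriv ?_
  have hl : ∀ k, lam k ≠ 0 := fun k => (hlam k).ne'
  refine Prod.ext ?_ (Prod.ext (funext fun j => ?_) rfl)
  · have hk : ∀ k, dot2 ((a * lam k)⁻¹ • Jpair (b k, c k)) ((a * lam k)⁻¹ • Jpair (b k, c k))
        * (lam k * a) = (b k ^ 2 + c k ^ 2) / lam k / a := fun k => by
      simp only [dot2, Jpair, Prod.smul_mk, smul_eq_mul]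
      field_simp [hl k]
      ring
    simp only [hk, ← Finset.sum_div]
    field_simp
    ring
  · simp only [Jpair, Prod.smul_mk, smul_eq_mul, Prod.neg_mk, Prod.mk.injEq]
    constructor <;> field_simp [hl j]
end
end

section
/- Let p, q be coprime positive integers, k a positive integer, and M ∈ {1, 2, 4}, with q odd when M > 1. Then the set Λ_{k,q,M} = (1/(2k))ℤ × ℤ⁴ × (2πq/M)ℤ is a discrete cocompact subgroup (a lattice) of Osc₂(1, p/q): it is a subgroup, it is discrete, and the quotient space Osc₂(1, p/q)/Λ_{k,q,M} is compact. -/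
open Real

noncomputable section

/-- the frequencies `(1, p/q)` of the oscillator group `Osc₂(1, p/q)` -/
def lam2 (p q : ℕ) : Fin 2 → ℝ := ![1, (p : ℝ) / q]

/-- the set `(1/(2k))ℤ × ℤ⁴ × Tℤ ⊆ Osc₂(1, p/q)` -/
def LamO2 (k : ℕ) (T : ℝ) : Set (OscG 2) :=
  {g | (∃ m : ℤ, g.1 = m / (2 * k))
    ∧ (∀ i : Fin 2, (∃ a : ℤ, (g.2.1 i).1 = a) ∧ (∃ b : ℤ, (g.2.1 i).2 = b))
    ∧ ∃ c : ℤ, g.2.2 = c * T}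

/-!
For `t ∈ (2πq/M)ℤ` the rotation `R(t)` turns each plane by a multiple of `π/2`, because `4/M` and
`q · (p/q) = p` are integers; so `R(t)` preserves `ℤ⁴` and `vᵀ J R(t) w ∈ ℤ` for `v, w ∈ ℤ⁴`. The
factor `½` in the product is then absorbed by the `(1/(2k))ℤ` of the central coordinate, and `Λ`
is closed under products and inverses. It is uniformly discrete because each coordinate is.
Right translation by `(x, u, s) ∈ Λ` sends `(z, v, t)` to
`(z + x + ½ vᵀ J R(t) u, v + R(t) u, t + s)`; since `R(t)` is a rotation, `v + R(t) ℤ⁴` meets a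
fixed box, and then `s` and `x` can be chosen to bring the other two coordinates into bounded
intervals. So a compact box maps onto the quotient.
-/

-- `c * x ∈ 𝐙` encodes `x ∈ c⁻¹ℤ`.
local notation "𝐙" => (⊥ : Subring ℝ)

lemma eq_of_mul_mem_bot_of_abs_sub_lt {c x y : ℝ} (hc : 0 < c) (hx : c * x ∈ 𝐙) (hy : c * y ∈ 𝐙)
    (hxy : |x - y| < c⁻¹) : x = y := by
  obtain ⟨m, hm⟩ := Subring.mem_bot.mp hx
  obtain ⟨n, hn⟩ := Subring.mem_bot.mp hy
  have hmn : |((m - n : ℤ) : ℝ)| < 1 := by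
    rw [Int.cast_sub, hm, hn, ← mul_sub, abs_mul, abs_of_pos hc]
    calc c * |x - y| < c * c⁻¹ := by gcongr
      _ = 1 := mul_inv_cancel₀ hc.ne'
  have hmn' : m = n := sub_eq_zero.mp (Int.abs_lt_one_iff.mp (by exact_mod_cast hmn))
  exact mul_left_cancel₀ hc.ne' (by rw [← hm, ← hn, hmn'])

lemma exists_mul_mem_bot_add_mem_Ico {c : ℝ} (hc : 0 < c) (x : ℝ) :
    ∃ y, c * y ∈ 𝐙 ∧ x + y ∈ Set.Ico 0 c⁻¹ := by
  refine ⟨-⌊c * x⌋ / c, ?_, ?_⟩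
  · rw [mul_div_cancel₀ _ hc.ne']
    exact neg_mem (intCast_mem _ _)
  · have hfract : x + -⌊c * x⌋ / c = Int.fract (c * x) / c := by
      rw [Int.fract]
      field_simp
      ring
    rw [hfract, ← one_div]
    exact ⟨div_nonneg (Int.fract_nonneg _) hc.le, div_lt_div_of_pos_right (Int.fract_lt_one _) hc⟩

lemma cos_sin_int_mul_pi_div_two_mem_bot (n : ℤ) :
    cos (n * (π / 2)) ∈ 𝐙 ∧ sin (n * (π / 2)) ∈ 𝐙 := by
  induction n using Int.induction_on with
  | zero => simp [one_mem, zero_mem]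
  | succ n ih =>
    rw [Int.cast_add, Int.cast_one, add_one_mul, cos_add_pi_div_two, sin_add_pi_div_two]
    exact ⟨neg_mem ih.2, ih.1⟩
  | pred n ih =>
    rw [Int.cast_sub, Int.cast_one, sub_one_mul, cos_sub_pi_div_two, sin_sub_pi_div_two]
    exact ⟨ih.2, neg_mem ih.1⟩

lemma rot_add_s16 (θ : ℝ) (x y : ℝ × ℝ) : rot θ (x + y) = rot θ x + rot θ y := by
  simp only [rot, Prod.fst_add, Prod.snd_add, Prod.mk_add_mk, Prod.mk.injEq]
  constructor <;> ring

lemma rot_rot_neg (θ : ℝ) (x : ℝ × ℝ) : rot θ (rot (-θ) x) = x := by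
  simp only [rot, cos_neg, sin_neg]
  refine Prod.ext ?_ ?_
  · linear_combination x.1 * sin_sq_add_cos_sq θ
  · linear_combination x.2 * sin_sq_add_cos_sq θ

lemma rot_mem_prod {S : Subring ℝ} {θ : ℝ} (hc : cos θ ∈ S) (hs : sin θ ∈ S) {w : ℝ × ℝ}
    (hw : w ∈ S.prod S) : rot θ w ∈ S.prod S := by
  rw [Subring.mem_prod] at hw ⊢
  exact ⟨sub_mem (mul_mem hc hw.1) (mul_mem hs hw.2), add_mem (mul_mem hs hw.1) (mul_mem hc hw.2)⟩

lemma dot2_Jpair_mem {S : Subring ℝ} {v w : ℝ × ℝ} (hv : v ∈ S.prod S) (hw : w ∈ S.prod S) :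
    dot2 v (Jpair w) ∈ S := by
  rw [Subring.mem_prod] at hv hw
  exact add_mem (mul_mem hv.1 hw.2) (mul_mem hv.2 (neg_mem hw.1))

lemma rot_mem_Icc {θ : ℝ} {x : ℝ × ℝ} (hx : x ∈ Set.Icc 0 1 ×ˢ Set.Icc 0 1) :
    rot θ x ∈ Set.Icc (-2) 2 ×ˢ Set.Icc (-2) 2 := by
  obtain ⟨⟨h₁, h₁'⟩, ⟨h₂, h₂'⟩⟩ := hx
  have := neg_one_le_cos θ; have := cos_le_one θ
  have := neg_one_le_sin θ; have := sin_le_one θ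
  refine ⟨⟨?_, ?_⟩, ⟨?_, ?_⟩⟩ <;> simp only [rot] <;> nlinarith

lemma exists_mem_prod_bot_add_rot_mem_Icc (θ : ℝ) (v : ℝ × ℝ) :
    ∃ u ∈ (𝐙).prod 𝐙, v + rot θ u ∈ Set.Icc (-2) 2 ×ˢ Set.Icc (-2) 2 := by
  set c := rot (-θ) v
  obtain ⟨y₁, hy₁, hc₁⟩ := exists_mul_mem_bot_add_mem_Ico one_pos c.1
  obtain ⟨y₂, hy₂, hc₂⟩ := exists_mul_mem_bot_add_mem_Ico one_pos c.2
  rw [one_mul] at hy₁ hy₂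
  rw [inv_one] at hc₁ hc₂
  refine ⟨(y₁, y₂), Subring.mem_prod.mpr ⟨hy₁, hy₂⟩, ?_⟩
  rw [← rot_rot_neg θ v, ← rot_add_s16]
  exact rot_mem_Icc ⟨Set.Ico_subset_Icc_self hc₁, Set.Ico_subset_Icc_self hc₂⟩

lemma compactSpace_quot_of_isCompact {X : Type*} [TopologicalSpace X] {r : X → X → Prop}
    {K : Set X} (hK : IsCompact K) (h : ∀ g, ∃ x ∈ K, r g x) : CompactSpace (Quot r) := by
  have hsurj : Quot.mk r '' K = Set.univ := Set.eq_univ_of_forall fun y =>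
    Quot.inductionOn y fun g => by
      obtain ⟨x, hx, hgx⟩ := h g
      exact ⟨x, hx, (Quot.sound hgx).symm⟩
  exact ⟨hsurj ▸ hK.image continuous_quot_mk⟩

def RotationsPreserveIntPoints (lam : Fin 2 → ℝ) (T : ℝ) : Prop :=
  ∀ t, T⁻¹ * t ∈ 𝐙 → ∀ i, ∀ w ∈ (𝐙).prod 𝐙, rot (lam i * t) w ∈ (𝐙).prod 𝐙

section Lattice

variable {lam : Fin 2 → ℝ} {k : ℕ} {T : ℝ}

lemma mem_LamO2_iff (hk : k ≠ 0) (hT : T ≠ 0) {g : OscG 2} :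
    g ∈ LamO2 k T ↔ 2 * k * g.1 ∈ 𝐙 ∧ (∀ i, g.2.1 i ∈ (𝐙).prod 𝐙) ∧ T⁻¹ * g.2.2 ∈ 𝐙 := by
  have h2k : (2 * k : ℝ) ≠ 0 := by positivity
  simp only [LamO2, Subring.mem_prod, Subring.mem_bot, eq_comm (a := ((_ : ℤ) : ℝ))]
  refine and_congr (exists_congr fun m => ?_) (and_congr Iff.rfl (exists_congr fun c => ?_))
  · rw [eq_div_iff h2k, mul_comm]
  · rw [inv_mul_eq_iff_eq_mul₀ hT, mul_comm]

lemma oscOne_mem_LamO2 (hk : k ≠ 0) (hT : T ≠ 0) : oscOne 2 ∈ LamO2 k T := by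
  simp [mem_LamO2_iff hk hT, oscOne, Subring.mem_prod, zero_mem]

lemma oscMul_mem_LamO2 (hrot : RotationsPreserveIntPoints lam T) (hk : k ≠ 0) (hT : T ≠ 0)
    {g h : OscG 2} (hg : g ∈ LamO2 k T) (hh : h ∈ LamO2 k T) : oscMul lam g h ∈ LamO2 k T := by
  rw [mem_LamO2_iff hk hT] at hg hh ⊢
  obtain ⟨hz₁, hv₁, ht₁⟩ := hg
  obtain ⟨hz₂, hv₂, ht₂⟩ := hh
  have hR : ∀ i, rot (lam i * g.2.2) (h.2.1 i) ∈ (𝐙).prod 𝐙 := fun i => hrot _ ht₁ i _ (hv₂ i)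
  refine ⟨?_, fun i => add_mem (hv₁ i) (hR i), ?_⟩
  · have hz : 2 * k * (oscMul lam g h).1 = 2 * k * g.1 + 2 * k * h.1
        + k * ∑ i, dot2 (g.2.1 i) (Jpair (rot (lam i * g.2.2) (h.2.1 i))) := by
      simp only [oscMul]
      ring
    rw [hz]
    exact add_mem (add_mem hz₁ hz₂)
      (mul_mem (natCast_mem _ k) (sum_mem fun i _ => dot2_Jpair_mem (hv₁ i) (hR i)))
  · exact (mul_add T⁻¹ g.2.2 h.2.2).symm ▸ add_mem ht₁ ht₂

lemma oscInv_mem_LamO2 (hrot : RotationsPreserveIntPoints lam T) (hk : k ≠ 0) (hT : T ≠ 0)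
    {g : OscG 2} (hg : g ∈ LamO2 k T) : oscInv lam g ∈ LamO2 k T := by
  rw [mem_LamO2_iff hk hT] at hg ⊢
  obtain ⟨hz, hv, ht⟩ := hg
  have ht' : T⁻¹ * -g.2.2 ∈ 𝐙 := (mul_neg T⁻¹ g.2.2).symm ▸ neg_mem ht
  refine ⟨?_, fun i => neg_mem (hrot _ ht' i _ (hv i)), ht'⟩
  exact (mul_neg (2 * k : ℝ) g.1).symm ▸ neg_mem hz

lemma eq_of_mem_LamO2_of_dist_lt (hk : k ≠ 0) (hT : 0 < T) {g h : OscG 2}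
    (hg : g ∈ LamO2 k T) (hh : h ∈ LamO2 k T) (hgh : dist g h < min (2 * k : ℝ)⁻¹ (min 1 T)) :
    g = h := by
  rw [mem_LamO2_iff hk hT.ne'] at hg hh
  have h2k : (0 : ℝ) < 2 * k := by positivity
  simp only [Prod.dist_eq, max_lt_iff, lt_min_iff] at hgh
  obtain ⟨⟨hz, -⟩, ⟨⟨-, hv, -⟩, ⟨-, -, ht⟩⟩⟩ := hgh
  have hcoord : ∀ {x y : ℝ}, x ∈ 𝐙 → y ∈ 𝐙 → dist x y < 1 → x = y := fun hx hy hxy =>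
    eq_of_mul_mem_bot_of_abs_sub_lt one_pos (by rwa [one_mul]) (by rwa [one_mul])
      (by rwa [inv_one])
  refine Prod.ext (eq_of_mul_mem_bot_of_abs_sub_lt h2k hg.1 hh.1 hz)
    (Prod.ext (funext fun i => ?_)
      (eq_of_mul_mem_bot_of_abs_sub_lt (inv_pos.2 hT) hg.2.2 hh.2.2 (by rwa [inv_inv])))
  have hvi := (dist_le_pi_dist _ _ i).trans_lt hv
  rw [Prod.dist_eq, max_lt_iff] at hvi
  have hgi := Subring.mem_prod.mp (hg.2.1 i)
  have hhi := Subring.mem_prod.mp (hh.2.1 i)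
  exact Prod.ext (hcoord hgi.1 hhi.1 hvi.1) (hcoord hgi.2 hhi.2 hvi.2)

lemma discreteTopology_LamO2 (hk : k ≠ 0) (hT : 0 < T) : DiscreteTopology (LamO2 k T) :=
  DiscreteTopology.of_forall_le_dist (r := min (2 * k : ℝ)⁻¹ (min 1 T)) (by positivity)
    fun g h hne => not_lt.mp fun hgh =>
      hne (Subtype.ext (eq_of_mem_LamO2_of_dist_lt hk hT g.2 h.2 hgh))

def oscBox (k : ℕ) (T : ℝ) : Set (OscG 2) :=
  Set.Icc 0 (2 * k : ℝ)⁻¹ ×ˢ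
    (Set.univ.pi (fun _ => Set.Icc (-2) 2 ×ˢ Set.Icc (-2) 2) ×ˢ Set.Icc 0 T)

lemma isCompact_oscBox (k : ℕ) (T : ℝ) : IsCompact (oscBox k T) :=
  isCompact_Icc.prod
    ((isCompact_univ_pi fun _ => isCompact_Icc.prod isCompact_Icc).prod isCompact_Icc)

lemma exists_oscMul_mem_oscBox (hk : k ≠ 0) (hT : 0 < T) (g : OscG 2) :
    ∃ γ ∈ LamO2 k T, oscMul lam g γ ∈ oscBox k T := by
  obtain ⟨z, v, t⟩ := g
  choose u hu hvu using fun i => exists_mem_prod_bot_add_rot_mem_Icc (lam i * t) (v i)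
  obtain ⟨s, hs, hts⟩ := exists_mul_mem_bot_add_mem_Ico (inv_pos.2 hT) t
  obtain ⟨x, hx, hzx⟩ := exists_mul_mem_bot_add_mem_Ico (c := 2 * k) (by positivity)
    (z + (1 / 2) * ∑ i, dot2 (v i) (Jpair (rot (lam i * t) (u i))))
  refine ⟨(x, u, s), (mem_LamO2_iff hk hT.ne').2 ⟨hx, hu, hs⟩, ?_, fun i _ => hvu i, ?_⟩
  · rw [add_right_comm] at hzx
    exact Set.Ico_subset_Icc_self hzx
  · rw [inv_inv] at hts
    exact Set.Ico_subset_Icc_self hts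

theorem isLattice_LamO2 (hrot : RotationsPreserveIntPoints lam T) (hk : k ≠ 0) (hT : 0 < T) :
    IsLattice lam (LamO2 k T) where
  one_mem := oscOne_mem_LamO2 hk hT.ne'
  mul_mem _ hg _ hh := oscMul_mem_LamO2 hrot hk hT.ne' hg hh
  inv_mem _ hg := oscInv_mem_LamO2 hrot hk hT.ne' hg
  discrete := discreteTopology_LamO2 hk hT
  cocompact := by
    refine compactSpace_quot_of_isCompact (isCompact_oscBox k T) fun g => ?_
    obtain ⟨γ, hγ, hgγ⟩ := exists_oscMul_mem_oscBox (lam := lam) hk hT g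
    exact ⟨_, hgγ, γ, hγ, rfl⟩

end Lattice

lemma lam2_mul_eq_int_mul_pi_div_two {p q M : ℕ} (hq : 0 < q) (hM : M = 1 ∨ M = 2 ∨ M = 4)
    {t : ℝ} (ht : (2 * π * q / M)⁻¹ * t ∈ 𝐙) (i : Fin 2) :
    ∃ n : ℤ, lam2 p q i * t = n * (π / 2) := by
  obtain ⟨μ, hμ⟩ : ∃ μ : ℕ, (M : ℝ) * μ = 4 := by
    rcases hM with rfl | rfl | rfl
    exacts [⟨4, by norm_num⟩, ⟨2, by norm_num⟩, ⟨1, by norm_num⟩]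
  have hM0 : (M : ℝ) ≠ 0 := by rintro h; norm_num [h] at hμ
  obtain ⟨c, hc⟩ := Subring.mem_bot.mp ht
  rw [eq_inv_mul_iff_mul_eq₀ (by positivity)] at hc
  have ht' : t = c * μ * q * (π / 2) := by
    rw [← hc, div_mul_eq_mul_div, div_eq_iff hM0]
    linear_combination -(π * q * c / 2) * hμ
  fin_cases i
  · exact ⟨c * μ * q, by simp [lam2, ht']⟩
  · refine ⟨c * μ * p, ?_⟩
    simp only [lam2, Fin.mk_one, Matrix.cons_val_one, Matrix.cons_val_fin_one, ht']
    push_cast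
    field_simp

theorem stmt_16_general (p q k M : ℕ) (hq : 0 < q) (hk : 0 < k)
    (hM : M = 1 ∨ M = 2 ∨ M = 4) :
    IsLattice (lam2 p q) (LamO2 k (2 * Real.pi * q / M)) := by
  have hrot : RotationsPreserveIntPoints (lam2 p q) (2 * π * q / M) := fun t ht i w hw => by
    obtain ⟨n, hn⟩ := lam2_mul_eq_int_mul_pi_div_two hq hM ht i
    obtain ⟨hcos, hsin⟩ := cos_sin_int_mul_pi_div_two_mem_bot n
    exact hn ▸ rot_mem_prod hcos hsin hw
  exact isLattice_LamO2 hrot hk.ne' (by rcases hM with rfl | rfl | rfl <;> positivity)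

/-- For coprime positive integers `p, q`, a positive integer `k` and
`M ∈ {1,2,4}` with `q` odd when `M > 1`, the set
`Λ_{k,q,M} = (1/(2k))ℤ × ℤ⁴ × (2πq/M)ℤ` is a lattice of `Osc₂(1, p/q)`:
a discrete subgroup with compact quotient. -/
theorem stmt_16 (p q k M : ℕ) (hp : 0 < p) (hq : 0 < q) (hk : 0 < k)
    (hpq : Nat.Coprime p q) (hM : M = 1 ∨ M = 2 ∨ M = 4) (hodd : 1 < M → Odd q) :
    IsLattice (lam2 p q) (LamO2 k (2 * Real.pi * q / M)) :=
  stmt_16_general p q k M hq hk hM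
end
end
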